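/- arXiv:2010.12661 — 2 statements merged into one kernel-verified Lean document; each statement's English description precedes it below -/
import Mathlib

section
/- In any proper 4-coloring of the 7-vertex wheel graph (center plus regular unit hexagon) in which both equilateral triangles of side √3 formed by alternating hexagon vertices are non-monochromatic, at least one pair of opposite hexagon vertices (at distance 2) receives the same color. -/
open Complex

/-- The hexagon vertices of the wheel graph with center `c`. -/
noncomputable def wheelVtx (c : ℂ) (k : ℕ) : ℂ :=
  c + Complex.exp ((k : ℂ) * Real.pi * Complex.I / 3)

lemma dist_center (c : ℂ) (k : ℕ) : dist c (wheelVtx c k) = 1 := by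
  have h : ((k : ℂ) * Real.pi * Complex.I / 3) = ((k * Real.pi / 3 : ℝ) : ℂ) * Complex.I := by
    push_cast; ring
  rw [Complex.dist_eq, wheelVtx, sub_add_cancel_left, norm_neg, h,
    Complex.norm_exp_ofReal_mul_I]

lemma dist_adj (c : ℂ) (k : ℕ) : dist (wheelVtx c k) (wheelVtx c (k + 1)) = 1 := by
  have h1 : wheelVtx c k - wheelVtx c (k + 1)
      = Complex.exp ((k : ℂ) * Real.pi * Complex.I / 3) *
        (1 - Complex.exp (((Real.pi / 3 : ℝ) : ℂ) * Complex.I)) := by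
    rw [wheelVtx, wheelVtx, mul_sub, ← Complex.exp_add]
    push_cast
    ring_nf
  have h2 : ((k : ℂ) * Real.pi * Complex.I / 3) = ((k * Real.pi / 3 : ℝ) : ℂ) * Complex.I := by
    push_cast; ring
  rw [Complex.dist_eq, h1, norm_mul, h2, Complex.norm_exp_ofReal_mul_I, one_mul]
  have he : Complex.exp (((Real.pi / 3 : ℝ) : ℂ) * Complex.I)
      = ((1/2 : ℝ) : ℂ) + ((Real.sqrt 3 / 2 : ℝ) : ℂ) * Complex.I := by
    rw [Complex.exp_mul_I, ← Complex.ofReal_cos, ← Complex.ofReal_sin,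
      Real.cos_pi_div_three, Real.sin_pi_div_three]
  rw [he, Complex.norm_def, Complex.normSq_apply]
  simp only [Complex.sub_re, Complex.sub_im, Complex.add_re, Complex.add_im, Complex.one_re,
    Complex.one_im, Complex.ofReal_re, Complex.ofReal_im, Complex.mul_re, Complex.mul_im,
    Complex.I_re, Complex.I_im]
  rw [show ∀ x y : ℝ, (1 - (x + (y * 0 - 0 * 1))) * (1 - (x + (y * 0 - 0 * 1))) +
      (0 - (0 + (y * 1 + 0 * 0))) * (0 - (0 + (y * 1 + 0 * 0)))
      = (1-x)*(1-x) + y*y from fun x y => by ring]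
  rw [show ((1:ℝ) - 1/2) * (1 - 1/2) + Real.sqrt 3 / 2 * (Real.sqrt 3 / 2)
      = 1/4 + (Real.sqrt 3 * Real.sqrt 3)/4 by ring,
    Real.mul_self_sqrt (by norm_num)]
  norm_num

lemma combo (a v0 v1 v2 v3 v4 v5 : Fin 4)
    (h0 : a ≠ v0) (h1 : a ≠ v1) (h2 : a ≠ v2) (h3 : a ≠ v3) (h4 : a ≠ v4) (h5 : a ≠ v5)
    (e0 : v0 ≠ v1) (e1 : v1 ≠ v2) (e2 : v2 ≠ v3) (e3 : v3 ≠ v4) (e4 : v4 ≠ v5) (e5 : v5 ≠ v0)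
    (t1 : ¬(v0 = v2 ∧ v2 = v4)) (t2 : ¬(v1 = v3 ∧ v3 = v5))
    (o0 : v0 ≠ v3) (o1 : v1 ≠ v4) (o2 : v2 ≠ v5) : False := by
  revert a v0 v1 v2 v3 v4 v5; decide

theorem stmt8 (c : ℂ) (col : ℂ → Fin 4)
    (hproper : ∀ x ∈ insert c {z | ∃ k < 6, z = wheelVtx c k},
               ∀ y ∈ insert c {z | ∃ k < 6, z = wheelVtx c k},
      dist x y = 1 → col x ≠ col y)
    (hT1 : ¬(col (wheelVtx c 0) = col (wheelVtx c 2) ∧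
             col (wheelVtx c 2) = col (wheelVtx c 4)))
    (hT2 : ¬(col (wheelVtx c 1) = col (wheelVtx c 3) ∧
             col (wheelVtx c 3) = col (wheelVtx c 5))) :
    ∃ k < 3, col (wheelVtx c k) = col (wheelVtx c (k + 3)) := by
  by_contra h
  push_neg at h
  have memc : c ∈ insert c {z | ∃ k < 6, z = wheelVtx c k} := Set.mem_insert _ _
  have memv : ∀ k, k < 6 → wheelVtx c k ∈ insert c {z | ∃ k < 6, z = wheelVtx c k} :=
    fun k hk => Set.mem_insert_of_mem _ ⟨k, hk, rfl⟩
  have hc : ∀ k, k < 6 → col c ≠ col (wheelVtx c k) := fun k hk =>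
    hproper c memc _ (memv k hk) (dist_center c k)
  have ha : ∀ k, k + 1 < 6 → col (wheelVtx c k) ≠ col (wheelVtx c (k + 1)) := fun k hk =>
    hproper _ (memv k (by omega)) _ (memv (k+1) hk) (dist_adj c k)
  have h6 : wheelVtx c 6 = wheelVtx c 0 := by
    unfold wheelVtx
    rw [show ((0:ℕ):ℂ) * Real.pi * Complex.I / 3 = 0 by push_cast; ring, Complex.exp_zero,
      show ((6:ℕ):ℂ) * Real.pi * Complex.I / 3 = 2 * Real.pi * Complex.I by push_cast; ring,
      Complex.exp_two_pi_mul_I]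
  have e5 : col (wheelVtx c 5) ≠ col (wheelVtx c 0) := by
    have := dist_adj c 5
    rw [show (5:ℕ)+1 = 6 from rfl, h6] at this
    exact hproper _ (memv 5 (by omega)) _ (memv 0 (by omega)) this
  exact combo (col c) (col (wheelVtx c 0)) (col (wheelVtx c 1)) (col (wheelVtx c 2))
    (col (wheelVtx c 3)) (col (wheelVtx c 4)) (col (wheelVtx c 5))
    (hc 0 (by omega)) (hc 1 (by omega)) (hc 2 (by omega)) (hc 3 (by omega))
    (hc 4 (by omega)) (hc 5 (by omega))
    (ha 0 (by omega)) (ha 1 (by omega)) (ha 2 (by omega)) (ha 3 (by omega)) (ha 4 (by omega)) e5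
    hT1 hT2 (h 0 (by omega)) (h 1 (by omega)) (h 2 (by omega))
end

section
/- If every pair of points in the plane at distance 4 is monochromatic under some coloring χ : ℝ² → {1,2,3,4}, then χ is not a proper coloring with respect to unit distances (i.e., there exist two points at distance 1 with the same color). -/
theorem stmt11 (χ : EuclideanSpace ℝ (Fin 2) → Fin 4)
    (hmono : ∀ p q : EuclideanSpace ℝ (Fin 2), dist p q = 4 → χ p = χ q) :
    ∃ p q : EuclideanSpace ℝ (Fin 2), dist p q = 1 ∧ χ p = χ q := by
  set p : EuclideanSpace ℝ (Fin 2) := !₂[0, 0] with hp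
  set q : EuclideanSpace ℝ (Fin 2) := !₂[1, 0] with hq
  set r : EuclideanSpace ℝ (Fin 2) := !₂[1/2, Real.sqrt 63 / 2] with hr
  have h63 : Real.sqrt 63 ^ 2 = 63 := Real.sq_sqrt (by norm_num)
  have hpq : dist p q = 1 := by
    rw [EuclideanSpace.dist_eq]
    simp [Fin.sum_univ_two, hp, hq]
  have hrp : dist r p = 4 := by
    have hsum : (∑ i, dist (r i) (p i) ^ 2) = 16 := by
      simp [Fin.sum_univ_two, hp, hr, Real.dist_eq, sq_abs]
      nlinarith [h63]
    rw [EuclideanSpace.dist_eq, hsum, show (16:ℝ) = 4^2 by norm_num,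
      Real.sqrt_sq (by norm_num : (0:ℝ) ≤ 4)]
  have hrq : dist r q = 4 := by
    have hsum : (∑ i, dist (r i) (q i) ^ 2) = 16 := by
      simp [Fin.sum_univ_two, hq, hr, Real.dist_eq, sq_abs]
      nlinarith [h63]
    rw [EuclideanSpace.dist_eq, hsum, show (16:ℝ) = 4^2 by norm_num,
      Real.sqrt_sq (by norm_num : (0:ℝ) ≤ 4)]
  exact ⟨p, q, hpq, (hmono r p hrp).symm.trans (hmono r q hrq)⟩
end
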